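/- Let G be a graph, T ⊆ V(G) with |T| ≥ 2, and let S ⊆ V(G) \ T be a multiway near-separator of (G,T) such that S itself does not separate any terminal t from T \ {t} (i.e., every connected component of G−S contains either zero or at least two terminals, and at least one contains at least two). Then there exists a terminal t ∈ T and a non-terminal vertex v ∈ V(G) \ T such that in G − (S ∪ {v}) there is no path from t to any terminal of T \ {t}. -/

import Mathlib

open SimpleGraph

variable {V : Type*}

/-- The graph obtained from `G` by deleting a set `S` of vertices (kept as
isolated vertices; all edges incident to `S` are removed). -/
def SimpleGraph.eraseVerts (G : SimpleGraph V) (S : Set V) : SimpleGraph V where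
  Adj u v := G.Adj u v ∧ u ∉ S ∧ v ∉ S
  symm := ⟨fun u v ⟨h, hu, hv⟩ => ⟨h.symm, hv, hu⟩⟩
  loopless := ⟨fun v h => G.irrefl h.1⟩

/-- Two walks with the same endpoints are internally vertex-disjoint if they
share no vertex other than their common endpoints. -/
def IntDisjoint {G : SimpleGraph V} {a b : V} (p q : G.Walk a b) : Prop :=
  ∀ x ∈ p.support, x ∈ q.support → x = a ∨ x = b

/-- There exist two internally vertex-disjoint `a`–`b` paths in `G`
(the two paths may coincide if they have no internal vertices). -/
def TwoIVD (G : SimpleGraph V) (a b : V) : Prop :=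
  ∃ p q : G.Walk a b, p.IsPath ∧ q.IsPath ∧ IntDisjoint p q

/-- `S` is a multiway near-separator of `(G, T)`. -/
def IsMWNS (G : SimpleGraph V) (T S : Set V) : Prop :=
  S ⊆ Tᶜ ∧ ∀ t₁ ∈ T, ∀ t₂ ∈ T, t₁ ≠ t₂ → ¬ TwoIVD (G.eraseVerts S) t₁ t₂

/-- `G` contains a simple cycle through at least two terminals of `T`. -/
def HasTCycle (G : SimpleGraph V) (T : Set V) : Prop :=
  ∃ (v : V) (c : G.Walk v v), c.IsCycle ∧
    ∃ t₁ ∈ T, ∃ t₂ ∈ T, t₁ ≠ t₂ ∧ t₁ ∈ c.support ∧ t₂ ∈ c.support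

/-- `v` is a cut vertex of `G`. -/
def IsCutVertex (G : SimpleGraph V) (v : V) : Prop :=
  ∃ a b : V, a ≠ v ∧ b ≠ v ∧ G.Reachable a b ∧ ¬ (G.eraseVerts {v}).Reachable a b

/-- `B` is a block of `G`: a maximal vertex set inducing a connected subgraph
without a cut vertex. -/
def IsBlock (G : SimpleGraph V) (B : Set V) : Prop :=
  B.Nonempty ∧ (G.induce B).Connected ∧ (∀ v, ¬ IsCutVertex (G.induce B) v) ∧
  ∀ B' : Set V, B ⊆ B' → (G.induce B').Connected →
    (∀ v, ¬ IsCutVertex (G.induce B') v) → B' = B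

/-!
Menger's theorem for two paths, by Whitney's argument (two internally disjoint `a`–`w` paths
extend across an edge `wv` as soon as `v` reaches `a` avoiding `w`, and this holds all along an
`a`–`b` path when no single vertex separates `a` from `b`), turns the near-separator property into:
any two connected terminals of `H = G - S` are separated by a single vertex. Now take a terminal `t`
and a vertex `v ≠ t` separating `t` from a terminal of its component, with the component of `t` in
`H - v` as small as possible. If `v` were a terminal, or `t` still reached another terminal in
`H - v`, a vertex `c` separating the two terminals involved would yield such a pair whose component
lies inside that of `t` in `H - v` but misses `c`.
-/

section

variable {H : SimpleGraph V} {S T : Set V} {a b c t t' u v w x z : V}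

namespace SimpleGraph

lemma eraseVerts_le (H : SimpleGraph V) (S : Set V) : H.eraseVerts S ≤ H :=
  fun _ _ h => h.1

lemma eraseVerts_union (H : SimpleGraph V) (S S' : Set V) :
    H.eraseVerts (S ∪ S') = (H.eraseVerts S).eraseVerts S' := by
  ext u v
  simp only [eraseVerts, Set.mem_union]
  tauto

namespace Walk

lemma reachable_eraseVerts : ∀ {u z : V} (W : H.Walk u z), (∀ x ∈ W.support, x ∉ S) →
    (H.eraseVerts S).Reachable u z
  | _, _, nil, _ => Reachable.refl _
  | _, _, cons h W, hW =>
    have hW' : ∀ x ∈ W.support, x ∉ S := fun x hx => hW x (List.mem_cons_of_mem _ hx)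
    (show (H.eraseVerts S).Adj _ _ from
      ⟨h, hW _ (start_mem_support _), hW' _ W.start_mem_support⟩).reachable.trans
      (W.reachable_eraseVerts hW')

lemma notMem_support_of_eraseVerts : ∀ {u z : V} (W : (H.eraseVerts S).Walk u z), u ∉ S →
    ∀ x ∈ W.support, x ∉ S
  | _, _, nil, hu, _, hx => List.mem_singleton.1 hx ▸ hu
  | _, _, cons h W, hu, x, hx => by
    rcases List.mem_cons.1 hx with rfl | hx
    · exact hu
    · exact W.notMem_support_of_eraseVerts h.2.2 x hx

lemma mem_support_of_not_reachable_eraseVerts (h : ¬(H.eraseVerts {c}).Reachable u z)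
    (W : H.Walk u z) : c ∈ W.support := by
  by_contra hc
  exact h (W.reachable_eraseVerts fun x hx (hxc : x = c) => hc (hxc ▸ hx))

lemma IsPath.reachable_eraseVerts_end {p : H.Walk u v} (hp : p.IsPath) (hw : w ∈ p.support)
    (hwv : v ≠ w) : (H.eraseVerts {v}).Reachable u w := by
  classical
  exact (p.takeUntil w hw).reachable_eraseVerts fun _ hx (hxv : _ = v) =>
    endpoint_notMem_support_takeUntil hp hw hwv (hxv ▸ hx)

lemma exists_first_mem {X : Set V} : ∀ {u z : V} (Q : H.Walk u z), z ∈ X →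
    ∃ x ∈ X, ∃ R : H.Walk u x, R.support ⊆ Q.support ∧ ∀ y ∈ R.support, y ∈ X → y = x
  | _, _, nil, hz => ⟨_, hz, nil, List.Subset.refl _, fun y hy _ => List.mem_singleton.1 hy⟩
  | u, _, cons h Q, hz => by
    by_cases hu : u ∈ X
    · exact ⟨u, hu, nil, by simp, fun y hy _ => List.mem_singleton.1 hy⟩
    obtain ⟨x, hx, R, hRQ, hRX⟩ := Q.exists_first_mem hz
    refine ⟨x, hx, cons h R, List.cons_subset_cons _ hRQ, fun y hy hyX => ?_⟩
    rcases List.mem_cons.1 hy with rfl | hy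
    · exact (hu hyX).elim
    · exact hRX y hy hyX

end Walk

lemma not_reachable_eraseVerts_singleton (h : u ≠ v) : ¬(H.eraseVerts {v}).Reachable u v :=
  fun ⟨W⟩ => W.notMem_support_of_eraseVerts h v W.end_mem_support rfl

lemma Reachable.eraseVerts_of_not_reachable (hv : ¬(H.eraseVerts {c}).Reachable x v)
    (hz : (H.eraseVerts {c}).Reachable x z) : (H.eraseVerts {v}).Reachable x z := by
  classical
  obtain ⟨W⟩ := hz
  refine (W.mapLe (eraseVerts_le H {c})).reachable_eraseVerts fun y hy (hyv : y = v) => ?_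
  rw [Walk.support_mapLe_eq_support] at hy
  exact hv ⟨W.takeUntil v (hyv ▸ hy)⟩

lemma ncard_reachable_eraseVerts_lt [Finite V] (hxc : x ≠ c)
    (hxv : ¬(H.eraseVerts {c}).Reachable x v) (htx : (H.eraseVerts {v}).Reachable t x)
    (htc : (H.eraseVerts {v}).Reachable t c) :
    {z | (H.eraseVerts {c}).Reachable x z}.ncard < {z | (H.eraseVerts {v}).Reachable t z}.ncard :=
  Set.ncard_lt_ncard ((Set.ssubset_iff_of_subset fun _ hz =>
    htx.trans (hz.eraseVerts_of_not_reachable hxv)).2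
      ⟨c, htc, not_reachable_eraseVerts_singleton hxc⟩) (Set.toFinite _)

end SimpleGraph

lemma IntDisjoint.symm {p q : H.Walk a b} (h : IntDisjoint p q) : IntDisjoint q p :=
  fun x hx hx' => h x hx' hx

lemma IntDisjoint.twoIVD {p q : H.Walk a b} (h : IntDisjoint p q) : TwoIVD H a b := by
  classical
  exact ⟨p.bypass, q.bypass, p.bypass_isPath, q.bypass_isPath, fun x hx hx' =>
    h x (p.support_bypass_subset_support hx) (q.support_bypass_subset_support hx')⟩

lemma SimpleGraph.Adj.twoIVD (h : H.Adj a b) : TwoIVD H a b :=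
  IntDisjoint.twoIVD (p := h.toWalk) (q := h.toWalk) fun x hx _ => by simpa using hx

lemma twoIVD_of_adj_of_walk_to_first_mem {P₁ P₂ : H.Walk a w} (hP₁ : P₁.IsPath)
    (hP : IntDisjoint P₁ P₂) (hwv : H.Adj w v) (R : H.Walk v x) (hx : x ∈ P₁.support)
    (hxw : x ≠ w) (hRX : ∀ y ∈ R.support, y ∈ P₁.support ∨ y ∈ P₂.support → y = x) :
    TwoIVD H a v := by
  classical
  refine IntDisjoint.twoIVD (p := (P₁.takeUntil x hx).append R.reverse) (q := P₂.concat hwv)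
    fun y hyA hyB => ?_
  simp only [Walk.mem_support_append_iff, Walk.support_reverse, List.mem_reverse,
    Walk.support_concat, List.mem_append, List.mem_singleton] at hyA hyB
  rcases hyB with hy₂ | rfl
  · rcases hyA with hyT | hyR
    · refine (hP y (P₁.support_takeUntil_subset_support hx hyT) hy₂).imp id fun hyw => ?_
      exact (Walk.endpoint_notMem_support_takeUntil hP₁ hx hxw.symm (hyw ▸ hyT)).elim
    · obtain rfl := hRX y hyR (Or.inr hy₂)
      exact (hP y hx hy₂).imp id fun hyw => (hxw hyw).elim
  · exact Or.inr rfl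

lemma TwoIVD.of_adj (h : TwoIVD H a w) (hwv : H.Adj w v)
    (hva : (H.eraseVerts {w}).Reachable v a) : TwoIVD H a v := by
  obtain ⟨P₁, P₂, hP₁, hP₂, hP⟩ := h
  obtain ⟨Q⟩ := hva
  obtain ⟨x, hx, R, hRQ, hRX⟩ := (Q.mapLe (eraseVerts_le H {w})).exists_first_mem
    (X := {y | y ∈ P₁.support ∨ y ∈ P₂.support}) (Or.inl P₁.start_mem_support)
  have hxw : x ≠ w := Q.notMem_support_of_eraseVerts hwv.ne.symm x
    (by simpa using hRQ R.end_mem_support)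
  rcases hx with hx | hx
  · exact twoIVD_of_adj_of_walk_to_first_mem hP₁ hP hwv R hx hxw hRX
  · exact twoIVD_of_adj_of_walk_to_first_mem hP₂ hP.symm hwv R hx hxw
      fun y hy hyX => hRX y hy hyX.symm

theorem twoIVD_of_forall_reachable_eraseVerts (hab : a ≠ b) (hr : H.Reachable a b)
    (hnc : ∀ c, c ≠ a → c ≠ b → (H.eraseVerts {c}).Reachable a b) : TwoIVD H a b := by
  obtain ⟨P, hP⟩ := hr.exists_isPath
  suffices key : ∀ {w} (T : H.Walk w b) (P' : H.Walk a w), (P'.append T).IsPath →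
      (w = a ∨ TwoIVD H a w) → TwoIVD H a b from key P Walk.nil (by simpa using hP) (Or.inl rfl)
  clear P hP hr
  intro w T
  induction T with
  | nil => exact fun _ _ hb => hb.resolve_left hab.symm
  | @cons w v b hwv T ih =>
    intro P' hpath hw
    rw [← Walk.concat_append] at hpath
    refine ih hab hnc (P'.concat hwv) hpath (Or.inr ?_)
    rcases eq_or_ne w a with rfl | hwa
    · exact hwv.twoIVD
    have hwT : w ∉ T.support := fun h =>
      hpath.ne_of_mem_support_of_append hwv.ne (by simp) h rfl
    have hwb : w ≠ b := fun h => hwT (h ▸ T.end_mem_support)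
    exact (hw.resolve_left hwa).of_adj hwv <|
      (T.reachable_eraseVerts fun x hx (hxw : x = w) => hwT (hxw ▸ hx)).trans
        (hnc w hwa hwb).symm

def TerminalsSeparableByVertex (H : SimpleGraph V) (T : Set V) : Prop :=
  ∀ t ∈ T, ∀ τ ∈ T, t ≠ τ → H.Reachable t τ →
    ∃ c, c ≠ t ∧ c ≠ τ ∧ ¬(H.eraseVerts {c}).Reachable t τ

lemma IsMWNS.terminalsSeparableByVertex {G : SimpleGraph V} (hS : IsMWNS G T S) :
    TerminalsSeparableByVertex (G.eraseVerts S) T := by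
  intro t ht τ hτ hne hr
  by_contra! h
  exact hS.2 t ht τ hτ hne (twoIVD_of_forall_reachable_eraseVerts hne hr h)

def IsTerminalCut (H : SimpleGraph V) (T : Set V) (t v : V) : Prop :=
  t ∈ T ∧ v ≠ t ∧ ∃ τ ∈ T, H.Reachable t τ ∧ ¬(H.eraseVerts {v}).Reachable t τ

lemma IsTerminalCut.exists_lt_of_mem [Finite V] (hsep : TerminalsSeparableByVertex H T)
    (h : IsTerminalCut H T t v) (hv : v ∈ T) :
    ∃ x c, IsTerminalCut H T x c ∧ {z | (H.eraseVerts {c}).Reachable x z}.ncard <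
      {z | (H.eraseVerts {v}).Reachable t z}.ncard := by
  classical
  obtain ⟨ht, hvt, τ, hτ, ⟨W⟩, hnr⟩ := h
  have htv : H.Reachable t v := ⟨W.takeUntil v (W.mem_support_of_not_reachable_eraseVerts hnr)⟩
  obtain ⟨c, hct, hcv, hc⟩ := hsep t ht v hv hvt.symm htv
  obtain ⟨p, hp⟩ := htv.exists_isPath
  exact ⟨t, c, ⟨ht, hct, v, hv, htv, hc⟩, ncard_reachable_eraseVerts_lt hct.symm hc
    (Reachable.refl t) (hp.reachable_eraseVerts_end
      (p.mem_support_of_not_reachable_eraseVerts hc) hcv.symm)⟩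

lemma exists_isTerminalCut_lt_of_reachable [Finite V] (hsep : TerminalsSeparableByVertex H T)
    (ht : t ∈ T) (ht' : t' ∈ T) (hne : t' ≠ t) (hr : (H.eraseVerts {v}).Reachable t t') :
    ∃ x c, IsTerminalCut H T x c ∧ {z | (H.eraseVerts {c}).Reachable x z}.ncard <
      {z | (H.eraseVerts {v}).Reachable t z}.ncard := by
  classical
  obtain ⟨c, hct, hct', hc⟩ := hsep t ht t' ht' hne.symm (hr.mono (eraseVerts_le H {v}))
  obtain ⟨W⟩ := hr
  have hrH : H.Reachable t t' := ⟨W.mapLe (eraseVerts_le H {v})⟩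
  have hcW : c ∈ W.support := by
    simpa using (W.mapLe (eraseVerts_le H {v})).mem_support_of_not_reachable_eraseVerts hc
  have htc : (H.eraseVerts {v}).Reachable t c := ⟨W.takeUntil c hcW⟩
  by_cases hv : (H.eraseVerts {c}).Reachable t v
  · have hv' : ¬(H.eraseVerts {c}).Reachable t' v := fun h => hc (hv.trans h.symm)
    exact ⟨t', c, ⟨ht', hct', t, ht, hrH.symm, fun h => hc h.symm⟩,
      ncard_reachable_eraseVerts_lt hct'.symm hv' ⟨W⟩ htc⟩
  · exact ⟨t, c, ⟨ht, hct, t', ht', hrH, hc⟩,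
      ncard_reachable_eraseVerts_lt hct.symm hv (Reachable.refl t) htc⟩

theorem TerminalsSeparableByVertex.exists_isolating [Finite V]
    (hsep : TerminalsSeparableByVertex H T) {t₀ τ₀ : V} (ht₀ : t₀ ∈ T) (hτ₀ : τ₀ ∈ T)
    (hne : t₀ ≠ τ₀) (hr : H.Reachable t₀ τ₀) :
    ∃ t ∈ T, ∃ v ∈ Tᶜ, ∀ t' ∈ T, t' ≠ t → ¬(H.eraseVerts {v}).Reachable t t' := by
  obtain ⟨c, hct, -, hc⟩ := hsep t₀ ht₀ τ₀ hτ₀ hne hr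
  obtain ⟨⟨t, v⟩, hcut, hmin⟩ := Set.exists_min_image {p : V × V | IsTerminalCut H T p.1 p.2}
    (fun p => {z | (H.eraseVerts {p.2}).Reachable p.1 z}.ncard) (Set.toFinite _)
    ⟨(t₀, c), ht₀, hct, τ₀, hτ₀, hr, hc⟩
  have hnotlt : ∀ x c, IsTerminalCut H T x c →
      ¬{z | (H.eraseVerts {c}).Reachable x z}.ncard <
        {z | (H.eraseVerts {v}).Reachable t z}.ncard :=
    fun x c h => not_lt.2 (hmin (x, c) h)
  refine ⟨t, hcut.1, v, fun hv => ?_, fun t' ht' hne hr => ?_⟩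
  · obtain ⟨x, c, h, hlt⟩ := hcut.exists_lt_of_mem hsep hv
    exact hnotlt x c h hlt
  · obtain ⟨x, c, h, hlt⟩ := exists_isTerminalCut_lt_of_reachable hsep hcut.1 ht' hne hr
    exact hnotlt x c h hlt

end

theorem stmt3 [Fintype V] (G : SimpleGraph V) (T S : Set V)
    (hT2 : 2 ≤ T.ncard) (hS : IsMWNS G T S)
    (hnosep : ∀ t ∈ T, ∃ t' ∈ T, t' ≠ t ∧ (G.eraseVerts S).Reachable t t') :
    ∃ t ∈ T, ∃ v ∈ Tᶜ, ∀ t' ∈ T, t' ≠ t →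
      ¬ (G.eraseVerts (S ∪ {v})).Reachable t t' := by
  obtain ⟨t₀, ht₀⟩ := Set.nonempty_of_ncard_ne_zero (by omega : T.ncard ≠ 0)
  obtain ⟨t₁, ht₁, hne, hr⟩ := hnosep t₀ ht₀
  simp_rw [eraseVerts_union]
  exact hS.terminalsSeparableByVertex.exists_isolating ht₀ ht₁ hne.symm hr
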